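/- Let G be a graph, v an outer vertex, and e an inner edge adjacent to v, with w the vertex at the other end of e, so that contracting e merges v and w into a single vertex u of G/e. Then the outer face (G/e)/u exists if and only if (G/v)/w exists; in that case (G/e)/u = (G/v)/w, and the square commutes: δ^e ∘ δ^u = δ^v ∘ δ^w as graphical maps (G/e)/u → G. -/

import Mathlib

/-!  A formalization of the graphical category of finite (connected) multigraphs
with legs, loops and parallel edges, following the half-edge encoding:
a graph is given by a finite set of vertices, a finite set of half-edges,
an involution pairing the two halves of an edge (legs and free edges have a
fixed or unattached half), and an attachment map.  Graphical maps are encoded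
by their action on (half-)edges together with the assignment of an embedded
subgraph (given by its vertex set and its ι-closed set of half-edges) to each
vertex; `PreGMap.EqOn G f g` is equality of graphical maps out of `G`. -/

structure LegGraph where
  V : Finset ℕ
  H : Finset ℕ
  ι : ℕ → ℕ
  att : ℕ → Option ℕ

namespace LegGraph

/-- Two vertices are adjacent when some edge joins them. -/
def Adj (G : LegGraph) (v w : ℕ) : Prop :=
  ∃ h ∈ G.H, G.att h = some v ∧ G.att (G.ι h) = some w

/-- Connectedness of a graph. -/
def Connected (G : LegGraph) : Prop :=
  ∀ v ∈ G.V, ∀ w ∈ G.V, Relation.ReflTransGen G.Adj v w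

/-- Well-formedness: the involution and the attachment are internal to the
graph, and the graph is connected (graphs are finite connected multigraphs). -/
def Wf (G : LegGraph) : Prop :=
  (∀ h ∈ G.H, G.ι h ∈ G.H) ∧
  (∀ h ∈ G.H, G.ι (G.ι h) = h) ∧
  (∀ h ∈ G.H, ∀ v, G.att h = some v → v ∈ G.V) ∧
  G.Connected

/-- `h` is (a half of) an inner edge: both ends are attached to vertices. -/
def IsInnerEdge (G : LegGraph) (h : ℕ) : Prop :=
  h ∈ G.H ∧ h ≠ G.ι h ∧ (G.att h).isSome ∧ (G.att (G.ι h)).isSome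

/-- `h` is (a half of) a loop: an edge from a vertex to itself. -/
def IsLoop (G : LegGraph) (h : ℕ) : Prop :=
  h ∈ G.H ∧ h ≠ G.ι h ∧ ∃ v, G.att h = some v ∧ G.att (G.ι h) = some v

/-- The number of non-leg edges incident to `v` (a loop counts once). -/
def nonLegEdgeCount (G : LegGraph) (v : ℕ) : ℕ :=
  (G.H.filter fun h => G.att h = some v ∧ (G.att (G.ι h)).isSome ∧ G.att (G.ι h) ≠ some v).card +
  (G.H.filter fun h => G.att h = some v ∧ G.att (G.ι h) = some v ∧ h ≠ G.ι h).card / 2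

/-- An outer vertex: at most one incident non-leg edge. -/
def IsOuterVertex (G : LegGraph) (v : ℕ) : Prop :=
  v ∈ G.V ∧ G.nonLegEdgeCount v ≤ 1

/-- The corolla at `v`, as an embedded subgraph (vertex set and half-edges). -/
def corolla (G : LegGraph) (v : ℕ) : Finset ℕ × Finset ℕ :=
  ({v}, G.H.filter fun h => G.att h = some v ∨ G.att (G.ι h) = some v)

/-- `G/b`: contract the (non-loop) inner edge `b`, merging its two endpoints
into the single vertex `min x y`. -/
def contract (G : LegGraph) (b : ℕ) : LegGraph :=
  let x := (G.att b).getD 0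
  let y := (G.att (G.ι b)).getD 0
  let z := min x y
  let H' := G.H.filter fun h => h ≠ b ∧ h ≠ G.ι b
  { V := insert z ((G.V.erase x).erase y)
    H := H'
    ι := fun h => if h ∈ H' then G.ι h else h
    att := fun h => if h ∈ H' then
        (if G.att h = some x ∨ G.att h = some y then some z else G.att h) else none }

/-- `G/v`: delete the (outer) vertex `v` together with its legs and loops;
edges joining `v` to other vertices become legs. -/
def delVertex (G : LegGraph) (v : ℕ) : LegGraph :=
  let H' := G.H.filter fun h =>
    ¬ ((G.att h = some v ∨ G.att (G.ι h) = some v) ∧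
       (G.att h = some v ∨ G.att h = none) ∧
       (G.att (G.ι h) = some v ∨ G.att (G.ι h) = none))
  { V := G.V.erase v
    H := H'
    ι := fun h => if h ∈ H' then G.ι h else h
    att := fun h => if h ∈ H' then (if G.att h = some v then none else G.att h) else none }

/-- `G/ℓ`: snip the loop (or cut the edge) `l` into two legs, with fresh
half-edges `a` and `b` as the new free ends. -/
def snip (G : LegGraph) (l a b : ℕ) : LegGraph :=
  let H' := insert a (insert b G.H)
  { V := G.V
    H := H'
    ι := fun h => if h ∈ H' then
        (if h = l then a else if h = a then l else
         if h = G.ι l then b else if h = b then G.ι l else G.ι h) else h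
    att := fun h => if h ∈ H' then (if h = a ∨ h = b then none else G.att h) else none }

/-- `G_b`: subdivide the edge `b` by one new bivalent vertex `u`,
splitting `b` into the two edges `{b, n₁}` and `{n₂, ι b}`. -/
def subdiv (G : LegGraph) (b u n₁ n₂ : ℕ) : LegGraph :=
  let H' := insert n₁ (insert n₂ G.H)
  { V := insert u G.V
    H := H'
    ι := fun h => if h ∈ H' then
        (if h = b then n₁ else if h = n₁ then b else
         if h = n₂ then (if G.ι b = b then n₂ else G.ι b) else
         if h = G.ι b then n₂ else G.ι h) else h
    att := fun h => if h ∈ H' then (if h = n₁ ∨ h = n₂ then some u else G.att h) else none }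

/-- Validity of the data of a subdivision: `b` is an edge and the new names are fresh. -/
def IsDegen (G : LegGraph) (b u n₁ n₂ : ℕ) : Prop :=
  b ∈ G.H ∧ u ∉ G.V ∧ n₁ ∉ G.H ∧ n₂ ∉ G.H ∧ n₁ ≠ n₂

end LegGraph

/-- The data of a graphical map: a map on half-edges (inducing the map `f₀` on
edges) and, for each vertex, an embedded subgraph of the target
(its vertex set together with its set of half-edges). -/
structure PreGMap where
  e : ℕ → ℕ
  vimg : ℕ → Finset ℕ × Finset ℕ

/-- Composition of graphical maps: compose on edges; the embedded subgraph at a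
vertex is assembled by substituting the images of the vertices of its image. -/
def PreGMap.comp (g f : PreGMap) : PreGMap where
  e := g.e ∘ f.e
  vimg := fun v =>
    ((f.vimg v).1.biUnion fun w => (g.vimg w).1,
     (f.vimg v).2.image g.e ∪ (f.vimg v).1.biUnion fun w => (g.vimg w).2)

/-- Equality of graphical maps out of `G` (extensional equality of `f₀` and `f₁`). -/
def PreGMap.EqOn (G : LegGraph) (f g : PreGMap) : Prop :=
  (∀ h ∈ G.H, f.e h = g.e h) ∧ ∀ v ∈ G.V, f.vimg v = g.vimg v

namespace LegGraph

/-- The identity graphical map of `G`. -/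
def idMap (G : LegGraph) : PreGMap := ⟨id, G.corolla⟩

/-- The inner coface map `δ^b : G/b → G`: identity on edges, sending the merged
vertex to the embedded barbell subgraph of `G` around `b`, and every other
vertex to its corolla. -/
def innerCoface (G : LegGraph) (b : ℕ) : PreGMap :=
  let x := (G.att b).getD 0
  let y := (G.att (G.ι b)).getD 0
  { e := id
    vimg := fun v => if v = min x y then
        ({x, y}, G.H.filter fun h =>
          G.att h = some x ∨ G.att h = some y ∨
          G.att (G.ι h) = some x ∨ G.att (G.ι h) = some y)
      else G.corolla v }

/-- The outer coface map `δ^v : G/v → G`: identity on edges, every vertex to its corolla. -/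
def outerCoface (G : LegGraph) (_v : ℕ) : PreGMap := ⟨id, G.corolla⟩

/-- The cosnip map `δ^ℓ : G/ℓ → G`: both new legs are sent to the loop `l`,
identity on vertices. -/
def cosnip (G : LegGraph) (l a b : ℕ) : PreGMap :=
  { e := fun h => if h = a then G.ι l else if h = b then l else h
    vimg := G.corolla }

/-- The codegeneracy map `σ^b : G_b → G`: the two halves of the subdivided edge
are sent to `b`, the new bivalent vertex to the edge graph `η_b`, and every
other vertex to its corolla. -/
def codegeneracy (G : LegGraph) (b u n₁ n₂ : ℕ) : PreGMap :=
  { e := fun h => if h = n₁ then G.ι b else if h = n₂ then b else h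
    vimg := fun v => if v = u then ((∅ : Finset ℕ), ({b, G.ι b} : Finset ℕ))
      else G.corolla v }

/-- The conditions for `f` to be a graphical map `G → G'`: it maps edges to
edges, each vertex to an embedded subgraph of `G'`, the vertex sets of the
images are disjoint and together exhaust the vertices of `G'`, and boundaries
match: each half-edge at `v` is sent into the subgraph at `v`. -/
def IsGMap (G G' : LegGraph) (f : PreGMap) : Prop :=
  (∀ h ∈ G.H, f.e h ∈ G'.H ∧ (f.e (G.ι h) = f.e h ∨ f.e (G.ι h) = G'.ι (f.e h))) ∧
  (∀ v ∈ G.V, (f.vimg v).1 ⊆ G'.V ∧ (f.vimg v).2 ⊆ G'.H) ∧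
  (∀ v ∈ G.V, ∀ w ∈ G.V, v ≠ w → Disjoint (f.vimg v).1 (f.vimg w).1) ∧
  G.V.biUnion (fun v => (f.vimg v).1) = G'.V ∧
  (∀ v ∈ G.V, ∀ h ∈ G.H, G.att h = some v → f.e h ∈ (f.vimg v).2)

end LegGraph

/-- The three kinds of coface maps: inner cofaces, outer cofaces, and cosnips. -/
inductive CofaceKind where
  | inner (e : ℕ)
  | outer (v : ℕ)
  | snip (l a b : ℕ)

namespace LegGraph

/-- The source of the coface map of kind `k` into `G`. -/
def cofaceSource (G : LegGraph) : CofaceKind → LegGraph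
  | .inner e => G.contract e
  | .outer v => G.delVertex v
  | .snip l a b => G.snip l a b

/-- The coface map of kind `k` into `G`. -/
def cofaceMap (G : LegGraph) : CofaceKind → PreGMap
  | .inner e => G.innerCoface e
  | .outer v => G.outerCoface v
  | .snip l a b => G.cosnip l a b

/-- Validity of a coface map into `G`: inner cofaces contract non-loop inner
edges, outer cofaces delete outer vertices, cosnips snip loops (with fresh
names, leaving the graph connected). -/
def IsCoface (G : LegGraph) : CofaceKind → Prop
  | .inner e => G.IsInnerEdge e ∧ ¬ G.IsLoop e
  | .outer v => G.IsOuterVertex v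
  | .snip l a b => G.IsLoop l ∧ a ∉ G.H ∧ b ∉ G.H ∧ a ≠ b ∧ (G.snip l a b).Connected

end LegGraph

/-- `CofaceSeq G₁ G₂ f`: `f : G₁ → G₂` is a composite of a sequence of coface maps. -/
inductive CofaceSeq : LegGraph → LegGraph → PreGMap → Prop where
  | nil (G : LegGraph) : CofaceSeq G G G.idMap
  | cons {G₁ G₂ : LegGraph} {f : PreGMap} (k : CofaceKind) (hk : G₂.IsCoface k)
      (h : CofaceSeq G₁ (G₂.cofaceSource k) f) :
      CofaceSeq G₁ G₂ ((G₂.cofaceMap k).comp f)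

/-- `DegenSeq G₁ G₂ f`: `f : G₁ → G₂` is a composite of a sequence of codegeneracy maps. -/
inductive DegenSeq : LegGraph → LegGraph → PreGMap → Prop where
  | nil (G : LegGraph) : DegenSeq G G G.idMap
  | cons {G₁ G₂ : LegGraph} {f : PreGMap} (b u n₁ n₂ : ℕ) (hb : G₂.IsDegen b u n₁ n₂)
      (h : DegenSeq G₁ (G₂.subdiv b u n₁ n₂) f) :
      DegenSeq G₁ G₂ ((G₂.codegeneracy b u n₁ n₂).comp f)

/-- `ElemSeq G₁ G₂ f`: `f : G₁ → G₂` is an arbitrary composite of coface and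
codegeneracy maps. -/
inductive ElemSeq : LegGraph → LegGraph → PreGMap → Prop where
  | nil (G : LegGraph) : ElemSeq G G G.idMap
  | coface {G₁ G₂ : LegGraph} {f : PreGMap} (k : CofaceKind) (hk : G₂.IsCoface k)
      (h : ElemSeq G₁ (G₂.cofaceSource k) f) :
      ElemSeq G₁ G₂ ((G₂.cofaceMap k).comp f)
  | degen {G₁ G₂ : LegGraph} {f : PreGMap} (b u n₁ n₂ : ℕ) (hb : G₂.IsDegen b u n₁ n₂)
      (h : ElemSeq G₁ (G₂.subdiv b u n₁ n₂) f) :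
      ElemSeq G₁ G₂ ((G₂.codegeneracy b u n₁ n₂).comp f)

/-! Both `(G/e)/u` and `(G/v)/w` are `G` with `v` and `w` deleted: a half-edge disappears exactly
when it is attached to `v` or `w` and to no other vertex, and the surviving attachments to `v`
or `w` become free ends. Since `v` is outer, every half-edge at `v` other than `e` is a leg, so
after contracting `e` the non-leg edges and loops at `u` are exactly those at `w` in `G/v`;
hence `u` is outer in `G/e` iff `w` is outer in `G/v`. Both composites are the identity on
edges and send each remaining vertex to its corolla in `G`. -/

theorem PreGMap.comp_outerCoface_vimg {f : PreGMap} {G G' : LegGraph} {x z : ℕ}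
    (hf : f.e = id) (hfz : f.vimg z = G.corolla z) (hsub : (G'.corolla z).2 ⊆ (G.corolla z).2) :
    (f.comp (G'.outerCoface x)).vimg z = G.corolla z := by
  change (({z} : Finset ℕ).biUnion fun y => (f.vimg y).1,
    (G'.corolla z).2.image f.e ∪ ({z} : Finset ℕ).biUnion fun y => (f.vimg y).2) = G.corolla z
  rw [Finset.singleton_biUnion, Finset.singleton_biUnion, hfz, hf, Finset.image_id,
    Finset.union_eq_right.2 hsub]

namespace LegGraph

@[ext]
theorem ext {G₁ G₂ : LegGraph} (hV : G₁.V = G₂.V) (hH : G₁.H = G₂.H) (hι : G₁.ι = G₂.ι)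
    (hatt : G₁.att = G₂.att) : G₁ = G₂ := by
  cases G₁; cases G₂; simp_all

variable {G : LegGraph} {h : ℕ}

theorem Wf.ι_mem (hG : G.Wf) (hh : h ∈ G.H) : G.ι h ∈ G.H := hG.1 h hh

theorem Wf.ι_ι (hG : G.Wf) (hh : h ∈ G.H) : G.ι (G.ι h) = h := hG.2.1 h hh

theorem Wf.att_mem (hG : G.Wf) (hh : h ∈ G.H) {v : ℕ} (hv : G.att h = some v) : v ∈ G.V :=
  hG.2.2.1 h hh v hv

section Contract

variable {b v w : ℕ}

theorem mem_contract_H : h ∈ (G.contract b).H ↔ h ∈ G.H ∧ h ≠ b ∧ h ≠ G.ι b := by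
  simp [contract]

theorem contract_ι_of_mem (hh : h ∈ (G.contract b).H) : (G.contract b).ι h = G.ι h := by
  simp only [contract] at hh ⊢
  rw [if_pos hh]

theorem contract_att_of_mem (hv : G.att b = some v) (hw : G.att (G.ι b) = some w)
    (hh : h ∈ (G.contract b).H) :
    (G.contract b).att h =
      if G.att h = some v ∨ G.att h = some w then some (min v w) else G.att h := by
  simp only [contract, hv, hw, Option.getD_some] at hh ⊢
  rw [if_pos hh]

theorem contract_att_of_not_mem (hh : h ∉ (G.contract b).H) : (G.contract b).att h = none := by
  simp only [contract] at hh ⊢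
  rw [if_neg hh]

theorem contract_V (hv : G.att b = some v) (hw : G.att (G.ι b) = some w) :
    (G.contract b).V = insert (min v w) ((G.V.erase v).erase w) := by
  simp [contract, hv, hw]

theorem att_eq_of_contract_att_eq {z : ℕ} (hv : G.att b = some v) (hw : G.att (G.ι b) = some w)
    (hz : z ≠ min v w) (hh : (G.contract b).att h = some z) : G.att h = some z := by
  by_cases hm : h ∈ (G.contract b).H
  · rw [contract_att_of_mem hv hw hm] at hh
    split_ifs at hh
    exacts [absurd (Option.some_injective _ hh).symm hz, hh]
  · simp [contract_att_of_not_mem hm] at hh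

theorem Wf.ι_mem_contract (hG : G.Wf) (hb : b ∈ G.H) (hh : h ∈ (G.contract b).H) :
    G.ι h ∈ (G.contract b).H := by
  obtain ⟨hh, hhb, hhιb⟩ := mem_contract_H.1 hh
  refine mem_contract_H.2 ⟨hG.ι_mem hh, fun h' => hhιb ?_, fun h' => hhb ?_⟩
  · rw [← h', hG.ι_ι hh]
  · rw [← hG.ι_ι hh, h', hG.ι_ι hb]

end Contract

section DelVertex

variable {v : ℕ}

theorem mem_delVertex_H : h ∈ (G.delVertex v).H ↔ h ∈ G.H ∧
    ¬((G.att h = some v ∨ G.att (G.ι h) = some v) ∧ (G.att h = some v ∨ G.att h = none) ∧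
      (G.att (G.ι h) = some v ∨ G.att (G.ι h) = none)) := by
  simp [delVertex]

theorem mem_H_of_mem_delVertex (hh : h ∈ (G.delVertex v).H) : h ∈ G.H :=
  (mem_delVertex_H.1 hh).1

theorem delVertex_ι : (G.delVertex v).ι h = if h ∈ (G.delVertex v).H then G.ι h else h := rfl

theorem delVertex_att : (G.delVertex v).att h =
    if h ∈ (G.delVertex v).H then (if G.att h = some v then none else G.att h) else none := rfl

theorem delVertex_ι_of_mem (hh : h ∈ (G.delVertex v).H) : (G.delVertex v).ι h = G.ι h := by
  simp only [delVertex] at hh ⊢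
  rw [if_pos hh]

theorem delVertex_att_of_mem (hh : h ∈ (G.delVertex v).H) :
    (G.delVertex v).att h = if G.att h = some v then none else G.att h := by
  simp only [delVertex] at hh ⊢
  rw [if_pos hh]

theorem delVertex_att_of_not_mem (hh : h ∉ (G.delVertex v).H) : (G.delVertex v).att h = none := by
  simp only [delVertex] at hh ⊢
  rw [if_neg hh]

theorem att_eq_of_delVertex_att_eq {z : ℕ} (hh : (G.delVertex v).att h = some z) :
    G.att h = some z := by
  by_cases hm : h ∈ (G.delVertex v).H
  · rw [delVertex_att_of_mem hm] at hh
    split_ifs at hh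
    exact hh
  · simp [delVertex_att_of_not_mem hm] at hh

theorem delVertex_att_eq_none (hh : G.att h = some v) : (G.delVertex v).att h = none := by
  by_cases hm : h ∈ (G.delVertex v).H
  · rw [delVertex_att_of_mem hm, if_pos hh]
  · exact delVertex_att_of_not_mem hm

theorem Wf.ι_mem_delVertex (hG : G.Wf) (hh : h ∈ (G.delVertex v).H) :
    G.ι h ∈ (G.delVertex v).H := by
  rw [mem_delVertex_H] at hh ⊢
  obtain ⟨hh, hkeep⟩ := hh
  rw [hG.ι_ι hh]
  exact ⟨hG.ι_mem hh, by tauto⟩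

end DelVertex

theorem contract_delVertex_eq_delVertex_delVertex {v w e : ℕ} (hG : G.Wf) (he : e ∈ G.H)
    (hev : G.att e = some v) (hew : G.att (G.ι e) = some w) :
    (G.contract e).delVertex (min v w) = (G.delVertex v).delVertex w := by
  have hH : ((G.contract e).delVertex (min v w)).H = ((G.delVertex v).delVertex w).H := by
    ext h
    simp only [delVertex, contract, hev, hew, Option.getD_some, Finset.mem_filter]
    by_cases hh : h ∈ G.H
    · grind [hG.ι_mem hh, hG.ι_ι hh, hG.ι_ι he]
    · simp [hh]
  ext1
  · simp only [delVertex, contract_V hev hew]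
    grind
  · exact hH
  · funext h
    rw [delVertex_ι, delVertex_ι, hH]
    split_ifs with hm
    · rw [contract_ι_of_mem (mem_H_of_mem_delVertex (hH ▸ hm)),
        delVertex_ι_of_mem (mem_H_of_mem_delVertex hm)]
    · rfl
  · funext h
    rw [delVertex_att, delVertex_att, hH]
    by_cases hm : h ∈ ((G.delVertex v).delVertex w).H
    · rw [if_pos hm, if_pos hm, contract_att_of_mem hev hew (mem_H_of_mem_delVertex (hH ▸ hm)),
        delVertex_att_of_mem (mem_H_of_mem_delVertex hm)]
      grind
    · rw [if_neg hm, if_neg hm]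

theorem IsOuterVertex.att_ι_eq_none_or_ι_eq_self {v w e : ℕ} (hG : G.Wf) (hv : G.IsOuterVertex v)
    (he : e ∈ G.H) (hev : G.att e = some v) (hew : G.att (G.ι e) = some w) (hvw : v ≠ w)
    (hh : h ∈ G.H) (hhe : h ≠ e) (hhv : G.att h = some v) :
    G.att (G.ι h) = none ∨ G.ι h = h := by
  have hcount := hv.2
  unfold nonLegEdgeCount at hcount
  set A := G.H.filter fun h => G.att h = some v ∧ (G.att (G.ι h)).isSome ∧ G.att (G.ι h) ≠ some v
  set B := G.H.filter fun h => G.att h = some v ∧ G.att (G.ι h) = some v ∧ h ≠ G.ι h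
  have heA : e ∈ A := Finset.mem_filter.2 ⟨he, hev, by simp [hew], by simp [hew, hvw.symm]⟩
  have hA : A.card ≤ 1 := le_trans (Nat.le_add_right _ _) hcount
  have hB : B.card ≤ 1 := by
    have := Finset.card_pos.2 ⟨e, heA⟩
    omega
  rcases hιh : G.att (G.ι h) with _ | z
  · exact Or.inl rfl
  by_cases hz : z = v
  · subst hz
    by_contra! hne
    have hhB : h ∈ B := Finset.mem_filter.2 ⟨hh, hhv, hιh, hne.2.symm⟩
    have hιB : G.ι h ∈ B := Finset.mem_filter.2
      ⟨hG.ι_mem hh, hιh, by rw [hG.ι_ι hh, hhv], by rw [hG.ι_ι hh]; exact hne.2⟩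
    exact hne.2 (Finset.card_le_one.1 hB _ hιB _ hhB)
  · have hhA : h ∈ A := Finset.mem_filter.2 ⟨hh, hhv, by simp [hιh], by simpa [hιh]⟩
    exact absurd (Finset.card_le_one.1 hA _ hhA _ heA) hhe

theorem contract_nonLegEdgeCount_eq {v w e : ℕ} (hG : G.Wf) (hv : G.IsOuterVertex v)
    (he : e ∈ G.H) (hev : G.att e = some v) (hew : G.att (G.ι e) = some w) (hvw : v ≠ w) :
    (G.contract e).nonLegEdgeCount (min v w) = (G.delVertex v).nonLegEdgeCount w := by
  have hιe := hG.ι_ι he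
  unfold nonLegEdgeCount
  refine congrArg₂ (· + ·) (congrArg Finset.card ?_) (congrArg (Finset.card · / 2) ?_)
  all_goals
    ext h
    rw [Finset.mem_filter, Finset.mem_filter]
    by_cases hC : h ∈ (G.contract e).H
    · obtain ⟨hh, hhe, -⟩ := mem_contract_H.1 hC
      have hιh := hG.ι_mem hh
      have hιι := hG.ι_ι hh
      have hιC := hG.ι_mem_contract he hC
      have hιhe : G.ι h ≠ e := (mem_contract_H.1 hιC).2.1
      -- the half-edges at `v` other than `e` are legs, so they count neither at `u` nor at `w`
      have hlegh := hv.att_ι_eq_none_or_ι_eq_self hG he hev hew hvw hh hhe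
      have hlegιh := hv.att_ι_eq_none_or_ι_eq_self hG he hev hew hvw hιh hιhe
      rw [hιι] at hlegιh
      rw [contract_ι_of_mem hC, contract_att_of_mem hev hew hC, contract_att_of_mem hev hew hιC]
      by_cases hD : h ∈ (G.delVertex v).H
      · rw [delVertex_ι_of_mem hD, delVertex_att_of_mem hD,
          delVertex_att_of_mem (hG.ι_mem_delVertex hD)]
        simp only [hC, hD, true_and]
        rw [mem_delVertex_H] at hD
        grind
      · simp only [hC, hD, true_and, false_and, iff_false]
        rw [mem_delVertex_H] at hD
        grind
    · simp only [hC, false_and, false_iff, not_and]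
      intro hD
      rw [mem_contract_H] at hC
      have hh := mem_H_of_mem_delVertex hD
      obtain rfl | rfl : h = e ∨ h = G.ι e := by tauto
      · simp [delVertex_att_eq_none hev]
      · simp [delVertex_ι_of_mem hD, hιe, delVertex_att_eq_none hev]

theorem isOuterVertex_contract_iff {v w e : ℕ} (hG : G.Wf) (hv : G.IsOuterVertex v)
    (he : e ∈ G.H) (hev : G.att e = some v) (hew : G.att (G.ι e) = some w) (hvw : v ≠ w) :
    (G.contract e).IsOuterVertex (min v w) ↔ (G.delVertex v).IsOuterVertex w := by
  have hu : min v w ∈ (G.contract e).V := by simp [contract_V hev hew]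
  have hw : w ∈ (G.delVertex v).V :=
    Finset.mem_erase.2 ⟨hvw.symm, hG.att_mem (hG.ι_mem he) hew⟩
  simp only [IsOuterVertex, hu, hw, true_and, contract_nonLegEdgeCount_eq hG hv he hev hew hvw]

theorem contract_corolla_subset {v w e z : ℕ} (hev : G.att e = some v)
    (hew : G.att (G.ι e) = some w) (hz : z ≠ min v w) :
    ((G.contract e).corolla z).2 ⊆ (G.corolla z).2 := by
  intro h hh
  simp only [corolla, Finset.mem_filter] at hh ⊢
  obtain ⟨hm, hatt⟩ := hh
  rw [contract_ι_of_mem hm] at hatt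
  exact ⟨(mem_contract_H.1 hm).1, hatt.imp (att_eq_of_contract_att_eq hev hew hz)
    (att_eq_of_contract_att_eq hev hew hz)⟩

theorem delVertex_corolla_subset {v z : ℕ} : ((G.delVertex v).corolla z).2 ⊆ (G.corolla z).2 := by
  intro h hh
  simp only [corolla, Finset.mem_filter] at hh ⊢
  obtain ⟨hm, hatt⟩ := hh
  rw [delVertex_ι_of_mem hm] at hatt
  exact ⟨mem_H_of_mem_delVertex hm, hatt.imp att_eq_of_delVertex_att_eq att_eq_of_delVertex_att_eq⟩

theorem innerCoface_vimg_of_ne {v w e z : ℕ} (hev : G.att e = some v)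
    (hew : G.att (G.ι e) = some w) (hz : z ≠ min v w) : (G.innerCoface e).vimg z = G.corolla z := by
  simp only [innerCoface, hev, hew, Option.getD_some, if_neg hz]

theorem eqOn_innerCoface_comp_outerCoface {v w e : ℕ} (hev : G.att e = some v)
    (hew : G.att (G.ι e) = some w) :
    PreGMap.EqOn ((G.contract e).delVertex (min v w))
      ((G.innerCoface e).comp ((G.contract e).outerCoface (min v w)))
      ((G.outerCoface v).comp ((G.delVertex v).outerCoface w)) := by
  refine ⟨fun _ _ => rfl, fun z hz => ?_⟩
  have hz : z ≠ min v w := (Finset.mem_erase.1 hz).1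
  rw [PreGMap.comp_outerCoface_vimg rfl (innerCoface_vimg_of_ne hev hew hz)
      (contract_corolla_subset hev hew hz),
    PreGMap.comp_outerCoface_vimg rfl rfl delVertex_corolla_subset]

end LegGraph

theorem inner_outer_adjacent_general (G : LegGraph) (hG : G.Wf) (v w e : ℕ)
    (hv : G.IsOuterVertex v) (he : G.IsInnerEdge e)
    (hev : G.att e = some v) (hew : G.att (G.ι e) = some w) (hvw : v ≠ w) :
    ((G.contract e).IsOuterVertex (min v w) ↔ (G.delVertex v).IsOuterVertex w) ∧
    ((G.contract e).IsOuterVertex (min v w) →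
      ((G.contract e).delVertex (min v w) = (G.delVertex v).delVertex w ∧
       PreGMap.EqOn ((G.contract e).delVertex (min v w))
         ((G.innerCoface e).comp ((G.contract e).outerCoface (min v w)))
         ((G.outerCoface v).comp ((G.delVertex v).outerCoface w)))) :=
  ⟨LegGraph.isOuterVertex_contract_iff hG hv he.1 hev hew hvw, fun _ =>
    ⟨LegGraph.contract_delVertex_eq_delVertex_delVertex hG he.1 hev hew,
      LegGraph.eqOn_innerCoface_comp_outerCoface hev hew⟩⟩

/-- Let `v` be an outer vertex and `e` a (non-loop) inner edge
adjacent to `v`, with `w` the vertex at its other end, so that contracting `e`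
merges `v` and `w` into the single vertex `u = min v w` of `G/e`.  Then the
outer face `(G/e)/u` exists (i.e. `u` is an outer vertex of `G/e`) if and only
if `(G/v)/w` exists (i.e. `w` is an outer vertex of `G/v`); in that case
`(G/e)/u = (G/v)/w` and the square commutes: `δ^e ∘ δ^u = δ^v ∘ δ^w` as
graphical maps `(G/e)/u → G`. -/
theorem inner_outer_adjacent (G : LegGraph) (hG : G.Wf) (v w e : ℕ)
    (hv : G.IsOuterVertex v) (he : G.IsInnerEdge e) (hl : ¬ G.IsLoop e)
    (hev : G.att e = some v) (hew : G.att (G.ι e) = some w) (hvw : v ≠ w) :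
    ((G.contract e).IsOuterVertex (min v w) ↔ (G.delVertex v).IsOuterVertex w) ∧
    ((G.contract e).IsOuterVertex (min v w) →
      ((G.contract e).delVertex (min v w) = (G.delVertex v).delVertex w ∧
       PreGMap.EqOn ((G.contract e).delVertex (min v w))
         ((G.innerCoface e).comp ((G.contract e).outerCoface (min v w)))
         ((G.outerCoface v).comp ((G.delVertex v).outerCoface w)))) :=
  inner_outer_adjacent_general G hG v w e hv he hev hew hvw
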